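/- Let m ≥ 1 and let G^ξ: ℤ^m × S^{N-1} × S^{N-1} → ℝ be bounded functions, for ξ ∈ ℤ^m with |ξ| ≤ R, each 1-periodic in the first variable. Define for T > 0 and z in the closed unit ball of ℝ^N: g_T(z) = (1/T^m)·inf{ Σ_{|ξ|≤R} Σ_{β ∈ R₁^ξ(Q_T)} G^ξ(β, u(β), u(β+ξ)) : u: ℤ^m ∩ Q_T → S^{N-1}, (1/#(ℤ^m ∩ Q_T))·Σ_{α ∈ ℤ^m ∩ Q_T} u(α) = z }, where Q_T = (0,T)^m and R₁^ξ(Q_T) = {β ∈ ℤ^m ∩ Q_T : β, β+ξ ∈ Q_T}. Then for every z with |z| < 1 the limit G_hom(z) = lim_{T→∞} g_T(z) exists. -/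

import Mathlib

open Classical

/-- Lattice points of `ℤ^m` lying in the open cube `(0,T)^m`. -/
noncomputable def latticeCube (m : ℕ) (T : ℝ) : Finset (Fin m → ℤ) :=
  (Finset.Icc (fun _ => (0 : ℤ)) (fun _ => ⌈T⌉)).filter
    (fun β => ∀ j, (0 : ℝ) < (β j : ℝ) ∧ (β j : ℝ) < T)

/-- Interaction ranges `ξ ∈ ℤ^m` with Euclidean norm at most `R`. -/
noncomputable def rangeSet (m : ℕ) (R : ℝ) : Finset (Fin m → ℤ) :=
  (Finset.Icc (fun _ => -⌈R⌉) (fun _ => ⌈R⌉)).filter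
    (fun ξ => Real.sqrt (∑ j, ((ξ j : ℝ)) ^ 2) ≤ R)

/-- The discrete energy `E₁(u; Q_T)` of a spin field `u`. -/
noncomputable def latticeEnergy (m N : ℕ) (R : ℝ)
    (G : (Fin m → ℤ) → (Fin m → ℤ) → EuclideanSpace ℝ (Fin N) →
      EuclideanSpace ℝ (Fin N) → ℝ)
    (T : ℝ) (u : (Fin m → ℤ) → EuclideanSpace ℝ (Fin N)) : ℝ :=
  ∑ ξ ∈ rangeSet m R,
    ∑ β ∈ (latticeCube m T).filter (fun β => β + ξ ∈ latticeCube m T),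
      G ξ β (u β) (u (β + ξ))

/-- The normalized infimum `g_T(z)` with exact discrete average constraint. -/
noncomputable def gT (m N : ℕ) (R : ℝ)
    (G : (Fin m → ℤ) → (Fin m → ℤ) → EuclideanSpace ℝ (Fin N) →
      EuclideanSpace ℝ (Fin N) → ℝ)
    (T : ℝ) (z : EuclideanSpace ℝ (Fin N)) : ℝ :=
  (1 / T ^ m) * sInf { e : ℝ |
    ∃ u : (Fin m → ℤ) → EuclideanSpace ℝ (Fin N),
      (∀ β, ‖u β‖ = 1) ∧
      (((latticeCube m T).card : ℝ))⁻¹ • ∑ β ∈ latticeCube m T, u β = z ∧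
      e = latticeEnergy m N R G T u }

open Filter Topology Finset

/-!
The normalized minimal energies `minEnergy (cube m n) z / n ^ m` converge by an almost
subadditivity argument. Repeat a near-minimizer on `cube m k` periodically on
`cube m (q * k) ⊆ cube m n`: by periodicity of `G` every copy carries the same energy, and the
only uncontrolled bonds are those within distance `⌈R⌉` of the boundary of a copy or outside the
copies, which cost at most `C · #(rangeSet m R) · (n ^ m - q ^ m (k - 2⌈R⌉) ^ m)`. The average
constraint survives the gluing because the leftover sites, at least two of them, can be given unit
spins with average `z`: for `N ≥ 2` every vector of norm at most `ℓ ≥ 2` is a sum of `ℓ` unit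
vectors. Letting `n → ∞` and then `k → ∞` gives `limsup ≤ liminf`. Finally
`latticeCube m T = cube m (⌈T⌉₊ - 1)`, and `(⌈T⌉₊ - 1) / T → 1`.
-/

section SphereSums

variable {E : Type*} [NormedAddCommGroup E] [InnerProductSpace ℝ E]

lemma exists_norm_eq_one_inner_eq_zero [FiniteDimensional ℝ E] (hE : 2 ≤ Module.finrank ℝ E)
    (w : E) : ∃ s : E, ‖s‖ = 1 ∧ inner ℝ w s = 0 := by
  have hker : LinearMap.ker (innerSL ℝ w).toLinearMap ≠ ⊥ :=
    LinearMap.ker_ne_bot_of_finrank_lt (by rw [Module.finrank_self]; omega)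
  obtain ⟨x, hx, hx0⟩ := Submodule.exists_mem_ne_zero_of_ne_bot hker
  refine ⟨‖x‖⁻¹ • x, by simp [norm_smul, hx0], ?_⟩
  rw [inner_smul_right, show inner ℝ w x = 0 from hx, mul_zero]

lemma exists_norm_eq_one_add_eq [FiniteDimensional ℝ E] (hE : 2 ≤ Module.finrank ℝ E) {w : E}
    (hw : ‖w‖ ≤ 2) : ∃ a b : E, ‖a‖ = 1 ∧ ‖b‖ = 1 ∧ a + b = w := by
  obtain ⟨s, hs, hws⟩ := exists_norm_eq_one_inner_eq_zero hE w
  have hunit : ∀ t : ℝ, t ^ 2 = 1 - ‖w‖ ^ 2 / 4 → ‖(1 / 2 : ℝ) • w + t • s‖ = 1 := by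
    intro t ht
    have hpyth := norm_add_sq_eq_norm_sq_add_norm_sq_real
      (x := (1 / 2 : ℝ) • w) (y := t • s) (by simp [inner_smul_left, inner_smul_right, hws])
    rw [norm_smul, norm_smul, hs, Real.norm_eq_abs, Real.norm_eq_abs] at hpyth
    have : ‖(1 / 2 : ℝ) • w + t • s‖ ^ 2 = 1 := by
      nlinarith [sq_abs t, abs_of_pos (one_half_pos (α := ℝ))]
    nlinarith [norm_nonneg ((1 / 2 : ℝ) • w + t • s)]
  set t := √(1 - ‖w‖ ^ 2 / 4)
  have ht : t ^ 2 = 1 - ‖w‖ ^ 2 / 4 := Real.sq_sqrt (by nlinarith [norm_nonneg w])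
  exact ⟨_, _, hunit t ht, hunit (-t) (by rw [neg_sq, ht]), by module⟩

lemma exists_norm_eq_one_norm_sub_eq [Nontrivial E] (w : E) :
    ∃ v : E, ‖v‖ = 1 ∧ ‖w - v‖ = |‖w‖ - 1| := by
  rcases eq_or_ne w 0 with rfl | hw
  · obtain ⟨v, hv⟩ := exists_norm_eq E zero_le_one
    exact ⟨v, hv, by simp [hv]⟩
  · refine ⟨‖w‖⁻¹ • w, by simp [norm_smul, hw], ?_⟩
    have hsmul : w - ‖w‖⁻¹ • w = (1 - ‖w‖⁻¹) • w := by module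
    calc ‖w - ‖w‖⁻¹ • w‖ = |(1 - ‖w‖⁻¹) * ‖w‖| := by
          rw [hsmul, norm_smul, Real.norm_eq_abs, abs_mul, abs_norm]
      _ = |‖w‖ - 1| := by
          rw [sub_mul, one_mul, inv_mul_cancel₀ (norm_ne_zero_iff.mpr hw), abs_sub_comm]

lemma exists_sum_norm_eq_one_eq [FiniteDimensional ℝ E] (hE : 2 ≤ Module.finrank ℝ E)
    {ι : Type*} {s : Finset ι} (hs : 2 ≤ #s) {w : E} (hw : ‖w‖ ≤ #s) :
    ∃ v : ι → E, (∀ i, ‖v i‖ = 1) ∧ ∑ i ∈ s, v i = w := by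
  have : Nontrivial E := Module.nontrivial_of_finrank_pos (R := ℝ) (by omega)
  obtain ⟨n, hn⟩ : ∃ n, #s = n := ⟨_, rfl⟩
  rw [hn] at hs hw
  induction n, hs using Nat.le_induction generalizing s w with
  | base =>
    obtain ⟨i, j, hij, rfl⟩ := card_eq_two.mp hn
    obtain ⟨a, b, ha, hb, rfl⟩ := exists_norm_eq_one_add_eq hE (w := w) (by exact_mod_cast hw)
    refine ⟨fun x => if x = i then a else b, fun x => ?_, by simp [sum_pair hij, hij.symm]⟩
    dsimp only
    split_ifs <;> assumption
  | succ n hn2 ih =>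
    obtain ⟨i, hi⟩ := card_pos.mp (by omega : 0 < #s)
    obtain ⟨vi, hvi, hwvi⟩ := exists_norm_eq_one_norm_sub_eq w
    have hn2' : (2 : ℝ) ≤ n := by exact_mod_cast hn2
    obtain ⟨v, hv, hsum⟩ := ih (s := s.erase i) (w := w - vi)
      (by rw [hwvi, abs_le]; push_cast at hw; constructor <;> linarith [norm_nonneg w])
      (by rw [card_erase_of_mem hi, hn, Nat.add_sub_cancel])
    refine ⟨Function.update v i vi,
      (Function.forall_update_iff v (p := fun _ x => ‖x‖ = 1)).mpr ⟨hvi, fun x _ => hv x⟩, ?_⟩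
    rw [← add_sum_erase s _ hi, sum_update_of_notMem (notMem_erase i s), hsum,
      Function.update_self, add_sub_cancel]

lemma exists_norm_eq_one_sum_eq_card_smul [FiniteDimensional ℝ E] (hE : 2 ≤ Module.finrank ℝ E)
    {ι : Type*} {s : Finset ι} (hs : 2 ≤ #s) {z : E} (hz : ‖z‖ ≤ 1) :
    ∃ v : ι → E, (∀ i, ‖v i‖ = 1) ∧ ∑ i ∈ s, v i = (#s : ℝ) • z :=
  exists_sum_norm_eq_one_eq hE hs <| by
    rw [norm_smul, Real.norm_natCast]; exact mul_le_of_le_one_right (Nat.cast_nonneg _) hz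

end SphereSums

lemma le_mul_csInf_add {S : Set ℝ} {a c d : ℝ} (hS : S.Nonempty) (hc : 0 < c)
    (h : ∀ e ∈ S, a ≤ c * e + d) : a ≤ c * sInf S + d := by
  have : (a - d) / c ≤ sInf S :=
    le_csInf hS fun e he => by rw [div_le_iff₀ hc]; linarith [h e he]
  rw [div_le_iff₀ hc] at this
  linarith

lemma exists_tendsto_of_limsup_le_add {f δ : ℕ → ℝ} {B : ℝ} (hf : ∀ n, |f n| ≤ B)
    (hδ : Tendsto δ atTop (𝓝 0)) (h : ∀ᶠ k in atTop, limsup f atTop ≤ f k + δ k) :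
    ∃ L, Tendsto f atTop (𝓝 L) := by
  have hle : IsBoundedUnder (· ≤ ·) atTop f :=
    isBoundedUnder_of_eventually_le (.of_forall fun n => (abs_le.mp (hf n)).2)
  have hge : IsBoundedUnder (· ≥ ·) atTop f :=
    isBoundedUnder_of_eventually_ge (.of_forall fun n => (abs_le.mp (hf n)).1)
  refine ⟨limsup f atTop, tendsto_of_liminf_eq_limsup
    (le_antisymm (liminf_le_limsup hle hge) ?_) rfl hle hge⟩
  refine le_of_forall_pos_le_add fun ε hε => ?_
  have : ∀ᶠ k in atTop, limsup f atTop - ε ≤ f k :=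
    (h.and (hδ.eventually (ge_mem_nhds hε))).mono fun k hk => by linarith [hk.1, hk.2]
  linarith [le_liminf_of_le hle.isCoboundedUnder_ge this]

lemma tendsto_natCast_sub_div_atTop (c : ℕ) :
    Tendsto (fun n : ℕ => ((n - c : ℕ) : ℝ) / n) atTop (𝓝 1) := by
  have h := tendsto_const_nhds (x := (1 : ℝ)).sub (tendsto_const_div_atTop_nhds_zero_nat (c : ℝ))
  rw [sub_zero] at h
  refine h.congr' ((eventually_gt_atTop c).mono fun n hn => ?_)
  dsimp only
  rw [Nat.cast_sub hn.le, sub_div, div_self (Nat.cast_ne_zero.mpr (by omega))]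

lemma tendsto_sub_div_mul_div_atTop (c : ℕ) {k : ℕ} (hk : 0 < k) :
    Tendsto (fun n : ℕ => ((n - c) / k * k : ℕ) / (n : ℝ)) atTop (𝓝 1) := by
  refine tendsto_of_tendsto_of_tendsto_of_le_of_le' (tendsto_natCast_sub_div_atTop (c + k))
    tendsto_const_nhds (.of_forall fun n => ?_) ((eventually_gt_atTop 0).mono fun n hn => ?_)
  · have := Nat.lt_div_mul_add (a := n - c) hk
    gcongr
    omega
  · rw [div_le_one (by positivity)]
    exact_mod_cast (Nat.div_mul_le_self _ _).trans (Nat.sub_le _ _)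

section Cubes

variable {m : ℕ}

noncomputable def cube (m n : ℕ) : Finset (Fin m → ℤ) := Icc 1 (fun _ => (n : ℤ))

lemma mem_cube {n : ℕ} {β : Fin m → ℤ} : β ∈ cube m n ↔ ∀ j, 1 ≤ β j ∧ β j ≤ n := by
  simp [cube, Pi.le_def, forall_and]

lemma card_cube (m n : ℕ) : #(cube m n) = n ^ m := by
  simp [cube, Pi.card_Icc]

lemma cube_mono {n n' : ℕ} (h : n ≤ n') : cube m n ⊆ cube m n' :=
  Icc_subset_Icc le_rfl fun _ => by simpa using h

lemma latticeCube_eq_cube (m : ℕ) (T : ℝ) : latticeCube m T = cube m (⌈T⌉₊ - 1) := by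
  have key : ∀ b : ℤ, (0 < (b : ℝ) ∧ (b : ℝ) < T) ↔ 1 ≤ b ∧ b ≤ ((⌈T⌉₊ - 1 : ℕ) : ℤ) := by
    intro b
    rcases le_or_gt T 0 with hT | hT
    · rw [Nat.ceil_eq_zero.mpr hT]
      constructor
      · rintro ⟨h0, hT'⟩; linarith
      · rintro ⟨h1, h0⟩; simp at h0; omega
    · rw [Int.cast_pos, ← Int.lt_ceil, ← Int.natCast_ceil_eq_ceil hT.le]
      omega
  ext β
  simp only [latticeCube, mem_filter, mem_Icc, mem_cube, Pi.le_def, key]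
  refine ⟨fun h => h.2, fun h => ⟨⟨fun j => ?_, fun j => ?_⟩, h⟩⟩
  · linarith [(h j).1]
  · exact (Int.lt_ceil.mpr ((key _).mpr (h j)).2).le

noncomputable def tileOffsets (m q : ℕ) : Finset (Fin m → ℤ) := Icc 0 (fun _ => (q : ℤ) - 1)

lemma card_tileOffsets (m q : ℕ) : #(tileOffsets m q) = q ^ m := by
  simp [tileOffsets, Pi.card_Icc]

lemma mem_tileOffsets {q : ℕ} {a : Fin m → ℤ} : a ∈ tileOffsets m q ↔ ∀ j, 0 ≤ a j ∧ a j < q := by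
  simp [tileOffsets, Pi.le_def, forall_and]

def cubeRep (k : ℕ) (β : Fin m → ℤ) : Fin m → ℤ := fun j => (β j - 1) % k + 1

lemma cubeRep_add_nsmul {k : ℕ} {b : Fin m → ℤ} (hb : b ∈ cube m k) (a : Fin m → ℤ) :
    cubeRep k (b + k • a) = b := by
  funext j
  obtain ⟨h1, h2⟩ := mem_cube.mp hb j
  have : b j + k * a j - 1 = b j - 1 + k * a j := by ring
  simp only [cubeRep]
  rw [Pi.add_apply, Pi.smul_apply, nsmul_eq_mul, this, Int.add_mul_emod_self_left,
    Int.emod_eq_of_lt (by omega) (by omega), sub_add_cancel]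

end Cubes

section Tiling

variable {m q k : ℕ} {P : Finset (Fin m → ℤ)}

noncomputable def tileCopies (m q k : ℕ) (P : Finset (Fin m → ℤ)) : Finset (Fin m → ℤ) :=
  (tileOffsets m q ×ˢ P).image fun p => p.2 + k • p.1

lemma add_nsmul_mem_cube {a b : Fin m → ℤ} (ha : a ∈ tileOffsets m q) (hb : b ∈ cube m k) :
    b + k • a ∈ cube m (q * k) := by
  refine mem_cube.mpr fun j => ?_
  obtain ⟨ha0, haq⟩ := mem_tileOffsets.mp ha j
  obtain ⟨hb1, hbk⟩ := mem_cube.mp hb j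
  have : (k : ℤ) * a j ≤ k * (q - 1) := mul_le_mul_of_nonneg_left (by omega) (by positivity)
  simp only [Pi.add_apply, Pi.smul_apply]
  rw [nsmul_eq_mul]
  push_cast
  constructor <;> nlinarith

lemma injOn_tileCopies (hk : 0 < k) (hP : P ⊆ cube m k) :
    Set.InjOn (fun p : (Fin m → ℤ) × (Fin m → ℤ) => p.2 + k • p.1)
      (↑(tileOffsets m q ×ˢ P) : Set _) := by
  rintro ⟨a, b⟩ hab ⟨a', b'⟩ hab' h
  simp only [coe_product, Set.mem_prod, mem_coe] at hab hab' h
  have hb : b = b' := by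
    rw [← cubeRep_add_nsmul (hP hab.2) a, h, cubeRep_add_nsmul (hP hab'.2)]
  subst hb
  exact Prod.ext (nsmul_right_injective hk.ne' (add_left_cancel h)) rfl

lemma sum_tileCopies {M : Type*} [AddCommMonoid M] (hk : 0 < k) (hP : P ⊆ cube m k)
    (f : (Fin m → ℤ) → M) :
    ∑ β ∈ tileCopies m q k P, f β = ∑ a ∈ tileOffsets m q, ∑ b ∈ P, f (b + k • a) := by
  rw [tileCopies, sum_image (injOn_tileCopies hk hP), sum_product]

lemma card_tileCopies (hk : 0 < k) (hP : P ⊆ cube m k) :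
    #(tileCopies m q k P) = q ^ m * #P := by
  rw [tileCopies, card_image_of_injOn (injOn_tileCopies hk hP), card_product, card_tileOffsets]

lemma tileCopies_subset (hP : P ⊆ cube m k) : tileCopies m q k P ⊆ cube m (q * k) := by
  intro β hβ
  obtain ⟨⟨a, b⟩, hab, rfl⟩ := mem_image.mp hβ
  exact add_nsmul_mem_cube (mem_product.mp hab).1 (hP (mem_product.mp hab).2)

lemma tileCopies_cube (hk : 0 < k) : tileCopies m q k (cube m k) = cube m (q * k) :=
  eq_of_subset_of_card_le (tileCopies_subset subset_rfl) <| by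
    rw [card_tileCopies hk subset_rfl, card_cube, card_cube, mul_pow]

end Tiling

section SpinEnergy

variable {m N : ℕ} {R : ℝ}
  {G : (Fin m → ℤ) → (Fin m → ℤ) → EuclideanSpace ℝ (Fin N) → EuclideanSpace ℝ (Fin N) → ℝ}
  {C : ℝ} {z : EuclideanSpace ℝ (Fin N)} {k q n : ℕ}

noncomputable def bondSites (Q : Finset (Fin m → ℤ)) (ξ : Fin m → ℤ) : Finset (Fin m → ℤ) :=
  Q.filter fun β => β + ξ ∈ Q

variable (R G) in
noncomputable def energy (Q : Finset (Fin m → ℤ)) (u : (Fin m → ℤ) → EuclideanSpace ℝ (Fin N)) :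
    ℝ :=
  ∑ ξ ∈ rangeSet m R, ∑ β ∈ bondSites Q ξ, G ξ β (u β) (u (β + ξ))

variable (R G) in
def admissibleEnergies (Q : Finset (Fin m → ℤ)) (z : EuclideanSpace ℝ (Fin N)) : Set ℝ :=
  {e | ∃ u : (Fin m → ℤ) → EuclideanSpace ℝ (Fin N), (∀ β, ‖u β‖ = 1) ∧
    (#Q : ℝ)⁻¹ • ∑ β ∈ Q, u β = z ∧ e = energy R G Q u}

variable (R G) in
noncomputable def minEnergy (Q : Finset (Fin m → ℤ)) (z : EuclideanSpace ℝ (Fin N)) : ℝ :=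
  sInf (admissibleEnergies R G Q z)

lemma gT_eq_minEnergy (T : ℝ) (z : EuclideanSpace ℝ (Fin N)) :
    gT m N R G T z = 1 / T ^ m * minEnergy R G (latticeCube m T) z :=
  rfl

lemma abs_energy_le (hC : ∀ ξ β u v, |G ξ β u v| ≤ C) (Q : Finset (Fin m → ℤ))
    (u : (Fin m → ℤ) → EuclideanSpace ℝ (Fin N)) :
    |energy R G Q u| ≤ C * #(rangeSet m R) * #Q := by
  have hC0 : 0 ≤ C := (abs_nonneg _).trans (hC 0 0 0 0)
  calc |energy R G Q u|
      ≤ ∑ ξ ∈ rangeSet m R, ∑ β ∈ bondSites Q ξ, |G ξ β (u β) (u (β + ξ))| :=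
        (abs_sum_le_sum_abs _ _).trans (sum_le_sum fun ξ _ => abs_sum_le_sum_abs _ _)
    _ ≤ ∑ ξ ∈ rangeSet m R, ∑ β ∈ Q, C := sum_le_sum fun ξ _ =>
        (sum_le_sum fun β _ => hC _ _ _ _).trans
          (sum_le_sum_of_subset_of_nonneg (filter_subset _ _) fun _ _ _ => hC0)
    _ = C * #(rangeSet m R) * #Q := by simp only [sum_const, nsmul_eq_mul]; ring

lemma bddBelow_admissibleEnergies (hC : ∀ ξ β u v, |G ξ β u v| ≤ C) (Q : Finset (Fin m → ℤ))
    (z : EuclideanSpace ℝ (Fin N)) : BddBelow (admissibleEnergies R G Q z) :=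
  ⟨-(C * #(rangeSet m R) * #Q), by
    rintro _ ⟨u, -, -, rfl⟩
    exact neg_le_of_abs_le (abs_energy_le hC Q u)⟩

lemma minEnergy_le_energy (hC : ∀ ξ β u v, |G ξ β u v| ≤ C) {Q : Finset (Fin m → ℤ)}
    {z : EuclideanSpace ℝ (Fin N)} {u : (Fin m → ℤ) → EuclideanSpace ℝ (Fin N)}
    (hu : ∀ β, ‖u β‖ = 1) (havg : (#Q : ℝ)⁻¹ • ∑ β ∈ Q, u β = z) :
    minEnergy R G Q z ≤ energy R G Q u :=
  csInf_le (bddBelow_admissibleEnergies hC Q z) ⟨u, hu, havg, rfl⟩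

lemma abs_minEnergy_le (hC : ∀ ξ β u v, |G ξ β u v| ≤ C) (Q : Finset (Fin m → ℤ))
    (z : EuclideanSpace ℝ (Fin N)) : |minEnergy R G Q z| ≤ C * #(rangeSet m R) * #Q := by
  rcases (admissibleEnergies R G Q z).eq_empty_or_nonempty with h | h
  · have hC0 : 0 ≤ C := (abs_nonneg _).trans (hC 0 0 0 0)
    rw [minEnergy, h, Real.sInf_empty, abs_zero]
    positivity
  · obtain ⟨_, u, hu, havg, rfl⟩ := id h
    refine abs_le.mpr ⟨le_csInf h ?_, (minEnergy_le_energy hC hu havg).trans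
      (le_of_abs_le (abs_energy_le hC Q u))⟩
    rintro _ ⟨v, -, -, rfl⟩
    exact neg_le_of_abs_le (abs_energy_le hC Q v)

lemma admissibleEnergies_nonempty (hN : 2 ≤ N) {Q : Finset (Fin m → ℤ)} (hQ : 2 ≤ #Q)
    {z : EuclideanSpace ℝ (Fin N)} (hz : ‖z‖ ≤ 1) : (admissibleEnergies R G Q z).Nonempty := by
  obtain ⟨u, hu, hsum⟩ :=
    exists_norm_eq_one_sum_eq_card_smul (by rwa [finrank_euclideanSpace_fin]) hQ hz
  exact ⟨_, u, hu, by rw [hsum, inv_smul_smul₀ (Nat.cast_ne_zero.mpr (by omega))], rfl⟩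

lemma abs_apply_le_of_mem_rangeSet {ξ : Fin m → ℤ} (hξ : ξ ∈ rangeSet m R) (j : Fin m) :
    |ξ j| ≤ ⌈R⌉.toNat := by
  obtain ⟨h1, h2⟩ := mem_Icc.mp (mem_filter.mp hξ).1
  have h1j : -⌈R⌉ ≤ ξ j := h1 j
  have h2j : ξ j ≤ ⌈R⌉ := h2 j
  exact abs_le.mpr ⟨by omega, by omega⟩

lemma pow_sub_le_card_bondSites {r : ℕ} {ξ : Fin m → ℤ} (hξ : ∀ j, |ξ j| ≤ r) :
    (k - 2 * r) ^ m ≤ #(bondSites (cube m k) ξ) := by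
  calc (k - 2 * r) ^ m = #(Icc (fun _ => (1 + r : ℤ)) (fun _ => (k - r : ℤ))) := by
        simp only [Pi.card_Icc, Int.card_Icc, prod_const, card_univ, Fintype.card_fin]
        congr 1
        omega
    _ ≤ #(bondSites (cube m k) ξ) := card_le_card fun b hb => by
        obtain ⟨hb1, hb2⟩ := mem_Icc.mp hb
        have hb' : ∀ j, 1 + (r : ℤ) ≤ b j ∧ b j ≤ k - r := fun j => ⟨hb1 j, hb2 j⟩
        refine mem_filter.mpr ⟨mem_cube.mpr fun j => ?_, mem_cube.mpr fun j => ?_⟩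
        · have := hb' j; omega
        · have := hb' j; have := abs_le.mp (hξ j); rw [Pi.add_apply]; omega

lemma sum_bondSites_le_of_periodic (hk : 0 < k) (hn : q * k ≤ n) {r : ℕ} {ξ : Fin m → ℤ}
    (hξ : ∀ j, |ξ j| ≤ r) {g gk : (Fin m → ℤ) → ℝ} (hC0 : 0 ≤ C)
    (hg : ∀ β, g β ≤ C)
    (hper : ∀ a ∈ tileOffsets m q, ∀ b ∈ bondSites (cube m k) ξ, g (b + k • a) = gk b) :
    ∑ β ∈ bondSites (cube m n) ξ, g β ≤ q ^ m * ∑ b ∈ bondSites (cube m k) ξ, gk b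
      + C * ((n : ℝ) ^ m - (q : ℝ) ^ m * ((k - 2 * r : ℕ) : ℝ) ^ m) := by
  set Pk := bondSites (cube m k) ξ
  set D := tileCopies m q k Pk
  have hPk : Pk ⊆ cube m k := filter_subset _ _
  have hD : D ⊆ bondSites (cube m n) ξ := by
    intro β hβ
    obtain ⟨⟨a, b⟩, hab, rfl⟩ := mem_image.mp hβ
    obtain ⟨ha, hb⟩ := mem_product.mp hab
    obtain ⟨hb, hbξ⟩ := mem_filter.mp hb
    refine mem_filter.mpr ⟨cube_mono hn (add_nsmul_mem_cube ha hb), ?_⟩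
    rw [add_right_comm]
    exact cube_mono hn (add_nsmul_mem_cube ha hbξ)
  have hsumD : ∑ β ∈ D, g β = q ^ m * ∑ b ∈ Pk, gk b := by
    rw [sum_tileCopies hk hPk, sum_congr rfl fun a ha => sum_congr rfl (hper a ha), sum_const,
      card_tileOffsets, nsmul_eq_mul, Nat.cast_pow]
  have hcard : (#(bondSites (cube m n) ξ \ D) : ℝ) ≤ n ^ m - q ^ m * ((k - 2 * r : ℕ) : ℝ) ^ m := by
    have hPn : #(bondSites (cube m n) ξ) ≤ n ^ m := (card_filter_le _ _).trans (card_cube m n).le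
    have hPk' : (k - 2 * r) ^ m ≤ #Pk := pow_sub_le_card_bondSites hξ
    rw [card_sdiff_of_subset hD, Nat.cast_sub (card_le_card hD),
      card_tileCopies hk hPk]
    push_cast
    have : (q : ℝ) ^ m * ((k - 2 * r : ℕ) : ℝ) ^ m ≤ q ^ m * #Pk := by
      gcongr; exact_mod_cast hPk'
    have : (#(bondSites (cube m n) ξ) : ℝ) ≤ n ^ m := by exact_mod_cast hPn
    linarith
  calc ∑ β ∈ bondSites (cube m n) ξ, g β
      = ∑ β ∈ bondSites (cube m n) ξ \ D, g β + ∑ β ∈ D, g β := (sum_sdiff hD).symm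
    _ ≤ #(bondSites (cube m n) ξ \ D) • C + q ^ m * ∑ b ∈ Pk, gk b :=
        add_le_add (sum_le_card_nsmul _ _ _ fun β _ => hg β) hsumD.le
    _ ≤ _ := by
        rw [nsmul_eq_mul]
        linarith [mul_le_mul_of_nonneg_left hcard hC0]

noncomputable def gluedField {E : Type*} (q k : ℕ) (uk v : (Fin m → ℤ) → E) (β : Fin m → ℤ) : E :=
  if β ∈ cube m (q * k) then uk (cubeRep k β) else v β

lemma gluedField_add_nsmul {E : Type*} {uk v : (Fin m → ℤ) → E} {a b : Fin m → ℤ}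
    (ha : a ∈ tileOffsets m q) (hb : b ∈ cube m k) : gluedField q k uk v (b + k • a) = uk b := by
  rw [gluedField, if_pos (add_nsmul_mem_cube ha hb), cubeRep_add_nsmul hb]

lemma sum_gluedField {E : Type*} [AddCommGroup E] [Module ℝ E] (hk : 0 < k) (hn : q * k ≤ n)
    {uk v : (Fin m → ℤ) → E} {w : E} (huk : ∑ b ∈ cube m k, uk b = (#(cube m k) : ℝ) • w)
    (hv : ∑ β ∈ cube m n \ cube m (q * k), v β = (#(cube m n \ cube m (q * k)) : ℝ) • w) :
    ∑ β ∈ cube m n, gluedField q k uk v β = (#(cube m n) : ℝ) • w := by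
  have hsub := cube_mono (m := m) hn
  have hleft : ∑ β ∈ cube m n \ cube m (q * k), gluedField q k uk v β
      = ∑ β ∈ cube m n \ cube m (q * k), v β :=
    sum_congr rfl fun β hβ => if_neg (mem_sdiff.mp hβ).2
  have htiles : ∑ β ∈ cube m (q * k), gluedField q k uk v β = (#(cube m (q * k)) : ℝ) • w := by
    rw [← tileCopies_cube hk, sum_tileCopies hk subset_rfl,
      sum_congr rfl fun a ha => sum_congr rfl fun b hb => gluedField_add_nsmul ha hb, sum_const,
      huk, card_tileCopies hk subset_rfl, card_tileOffsets, ← Nat.cast_smul_eq_nsmul ℝ, smul_smul,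
      Nat.cast_mul]
  rw [← sum_sdiff hsub, hleft, hv, htiles, ← add_smul, ← Nat.cast_add,
    card_sdiff_add_card_eq_card hsub]

lemma energy_gluedField_le (hC : ∀ ξ β u v, |G ξ β u v| ≤ C)
    (hGper : ∀ ξ β γ u v, G ξ (β + γ) u v = G ξ β u v) (hk : 0 < k) (hn : q * k ≤ n)
    (uk v : (Fin m → ℤ) → EuclideanSpace ℝ (Fin N)) :
    energy R G (cube m n) (gluedField q k uk v) ≤ q ^ m * energy R G (cube m k) uk
      + C * #(rangeSet m R) * ((n : ℝ) ^ m - (q : ℝ) ^ m * ((k - 2 * ⌈R⌉.toNat : ℕ) : ℝ) ^ m) := by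
  have hC0 : 0 ≤ C := (abs_nonneg _).trans (hC 0 0 0 0)
  rw [energy, energy, mul_sum]
  calc _ ≤ ∑ ξ ∈ rangeSet m R, (q ^ m * ∑ b ∈ bondSites (cube m k) ξ, G ξ b (uk b) (uk (b + ξ))
        + C * ((n : ℝ) ^ m - (q : ℝ) ^ m * ((k - 2 * ⌈R⌉.toNat : ℕ) : ℝ) ^ m)) :=
        sum_le_sum fun ξ hξ => sum_bondSites_le_of_periodic hk hn
          (abs_apply_le_of_mem_rangeSet hξ) hC0 (fun β => le_of_abs_le (hC _ _ _ _))
          fun a ha b hb => by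
            rw [add_right_comm, gluedField_add_nsmul ha (mem_filter.mp hb).1,
              gluedField_add_nsmul ha (mem_filter.mp hb).2, hGper]
    _ = _ := by rw [sum_add_distrib, sum_const, nsmul_eq_mul]; ring

lemma two_le_card_cube_sdiff {n a : ℕ} (hm : 1 ≤ m) (ha : a + 2 ≤ n) :
    2 ≤ #(cube m n \ cube m a) := by
  rw [card_sdiff_of_subset (cube_mono (by omega)), card_cube, card_cube]
  have := pow_add_pow_le (Nat.zero_le a) (Nat.zero_le 2) (by omega : m ≠ 0)
  have := Nat.pow_le_pow_left ha m
  have := Nat.le_self_pow (by omega : m ≠ 0) 2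
  omega

lemma minEnergy_cube_le (hm : 1 ≤ m) (hN : 2 ≤ N) (hC : ∀ ξ β u v, |G ξ β u v| ≤ C)
    (hGper : ∀ ξ β γ u v, G ξ (β + γ) u v = G ξ β u v) (hz : ‖z‖ ≤ 1) (hk : 2 ≤ k)
    (hq : 1 ≤ q) (hn : q * k + 2 ≤ n) :
    minEnergy R G (cube m n) z ≤ q ^ m * minEnergy R G (cube m k) z
      + C * #(rangeSet m R) * ((n : ℝ) ^ m - (q : ℝ) ^ m * ((k - 2 * ⌈R⌉.toNat : ℕ) : ℝ) ^ m) := by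
  have hcube : ∀ {ℓ}, 2 ≤ ℓ → 2 ≤ #(cube m ℓ) := fun hℓ => by
    rw [card_cube]; exact hℓ.trans (Nat.le_self_pow (by omega) _)
  obtain ⟨v, hv, hvsum⟩ := exists_norm_eq_one_sum_eq_card_smul
    (by rwa [finrank_euclideanSpace_fin]) (two_le_card_cube_sdiff hm hn) hz
  refine le_mul_csInf_add (admissibleEnergies_nonempty hN (hcube hk) hz) (by positivity) ?_
  rintro _ ⟨uk, huk, hukavg, rfl⟩
  refine (minEnergy_le_energy hC (u := gluedField q k uk v) (fun β => ?_) ?_).trans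
    (energy_gluedField_le hC hGper (by omega) (by omega) uk v)
  · unfold gluedField; split_ifs; exacts [huk _, hv β]
  · have hn0 := hcube (by omega : 2 ≤ n)
    have hk0 := hcube hk
    rw [inv_smul_eq_iff₀ (Nat.cast_ne_zero.mpr (by omega))]
    rw [inv_smul_eq_iff₀ (Nat.cast_ne_zero.mpr (by omega))] at hukavg
    exact sum_gluedField (by omega) (by omega) hukavg hvsum

variable (R G z) in
noncomputable def cubeEnergyDensity (n : ℕ) : ℝ := minEnergy R G (cube m n) z / n ^ m

lemma abs_cubeEnergyDensity_le (hC : ∀ ξ β u v, |G ξ β u v| ≤ C) (n : ℕ) :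
    |cubeEnergyDensity R G z n| ≤ C * #(rangeSet m R) := by
  have hB : 0 ≤ C * #(rangeSet m R) := by
    have := (abs_nonneg _).trans (hC 0 0 0 0); positivity
  rw [cubeEnergyDensity, abs_div, abs_of_nonneg (a := (n : ℝ) ^ m) (by positivity)]
  refine div_le_of_le_mul₀ (by positivity) hB ?_
  simpa [card_cube] using abs_minEnergy_le (R := R) hC (cube m n) z

lemma cubeEnergyDensity_le (hm : 1 ≤ m) (hN : 2 ≤ N) (hC : ∀ ξ β u v, |G ξ β u v| ≤ C)
    (hGper : ∀ ξ β γ u v, G ξ (β + γ) u v = G ξ β u v) (hz : ‖z‖ ≤ 1) (hk : 2 ≤ k)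
    (hq : 1 ≤ q) (hn : q * k + 2 ≤ n) :
    cubeEnergyDensity R G z n ≤ ((q * k : ℕ) / (n : ℝ)) ^ m * cubeEnergyDensity R G z k
      + C * #(rangeSet m R) *
        (1 - ((q * k : ℕ) / (n : ℝ)) ^ m * (((k - 2 * ⌈R⌉.toNat : ℕ) : ℝ) / k) ^ m) := by
  have hn0 : (0 : ℝ) < n := by exact_mod_cast (by omega : 0 < n)
  have hk0 : (0 : ℝ) < k := by exact_mod_cast (by omega : 0 < k)
  rw [cubeEnergyDensity, div_le_iff₀ (by positivity)]
  refine (minEnergy_cube_le hm hN hC hGper hz hk hq hn).trans_eq ?_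
  rw [cubeEnergyDensity, Nat.cast_mul, div_pow, div_pow, mul_pow]
  field_simp

lemma limsup_cubeEnergyDensity_le (hm : 1 ≤ m) (hN : 2 ≤ N) (hC : ∀ ξ β u v, |G ξ β u v| ≤ C)
    (hGper : ∀ ξ β γ u v, G ξ (β + γ) u v = G ξ β u v) (hz : ‖z‖ ≤ 1) (hk : 2 ≤ k) :
    limsup (cubeEnergyDensity R G z) atTop ≤ cubeEnergyDensity R G z k
      + C * #(rangeSet m R) * (1 - (((k - 2 * ⌈R⌉.toNat : ℕ) : ℝ) / k) ^ m) := by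
  set B := C * #(rangeSet m R)
  set ρ := (((k - 2 * ⌈R⌉.toNat : ℕ) : ℝ) / k) ^ m
  set s : ℕ → ℝ := fun n => ((n - 2) / k * k : ℕ) / (n : ℝ)
  have hs : Tendsto (fun n => s n ^ m) atTop (𝓝 1) := by
    simpa only [one_pow] using (tendsto_sub_div_mul_div_atTop 2 (k := k) (by omega)).pow m
  have hψ : Tendsto (fun n => s n ^ m * cubeEnergyDensity R G z k + B * (1 - s n ^ m * ρ))
      atTop (𝓝 (cubeEnergyDensity R G z k + B * (1 - ρ))) := by
    simpa using (hs.mul_const _).add ((hs.mul_const ρ).const_sub 1 |>.const_mul B)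
  rw [← hψ.limsup_eq]
  have hbdd := abs_cubeEnergyDensity_le (R := R) (z := z) hC
  refine limsup_le_limsup ((eventually_ge_atTop (k + 2)).mono fun n hn => ?_)
    (isBoundedUnder_of_eventually_ge
      (.of_forall fun n => (abs_le.mp (hbdd n)).1)).isCoboundedUnder_le hψ.isBoundedUnder_le
  have hq : 1 ≤ (n - 2) / k := (Nat.le_div_iff_mul_le (by omega)).mpr (by omega)
  have hqk : (n - 2) / k * k + 2 ≤ n := by have := Nat.div_mul_le_self (n - 2) k; omega
  exact cubeEnergyDensity_le hm hN hC hGper hz hk hq hqk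

lemma tendsto_gT_of_tendsto_cubeEnergyDensity {L : ℝ}
    (hL : Tendsto (cubeEnergyDensity R G z) atTop (𝓝 L)) :
    Tendsto (fun T => gT m N R G T z) atTop (𝓝 L) := by
  have hside : Tendsto (fun T : ℝ => ⌈T⌉₊ - 1) atTop atTop :=
    (tendsto_sub_atTop_nat 1).comp tendsto_nat_ceil_atTop
  have hratio : Tendsto (fun T : ℝ => ((⌈T⌉₊ - 1 : ℕ) : ℝ) / T) atTop (𝓝 1) := by
    have h := tendsto_nat_ceil_div_atTop.sub (tendsto_inv_atTop_zero (𝕜 := ℝ))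
    rw [sub_zero] at h
    refine h.congr' ((eventually_gt_atTop 0).mono fun T hT => ?_)
    dsimp only
    rw [Nat.cast_sub (Nat.one_le_iff_ne_zero.mpr (Nat.ceil_pos.mpr hT).ne'), sub_div, Nat.cast_one,
      one_div]
  have h := (hratio.pow m).mul (hL.comp hside)
  rw [one_pow, one_mul] at h
  refine h.congr' ((eventually_ge_atTop 2).mono fun T hT => ?_)
  have hn : ((⌈T⌉₊ - 1 : ℕ) : ℝ) ≠ 0 := by
    have : 2 ≤ ⌈T⌉₊ := by exact_mod_cast hT.trans (Nat.le_ceil T)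
    exact Nat.cast_ne_zero.mpr (by omega)
  dsimp only
  rw [gT_eq_minEnergy, latticeCube_eq_cube, Function.comp_apply, cubeEnergyDensity, div_pow]
  field_simp

end SpinEnergy

theorem homogenization_formula_limit_exists_general
    (m N : ℕ) (hm : 1 ≤ m) (hN : 2 ≤ N) (R : ℝ)
    (G : (Fin m → ℤ) → (Fin m → ℤ) → EuclideanSpace ℝ (Fin N) →
      EuclideanSpace ℝ (Fin N) → ℝ)
    (hGbdd : ∃ C : ℝ, ∀ ξ β u v, |G ξ β u v| ≤ C)
    (hGper : ∀ ξ β γ u v, G ξ (β + γ) u v = G ξ β u v)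
    (z : EuclideanSpace ℝ (Fin N)) (hz : ‖z‖ < 1) :
    ∃ L : ℝ, Filter.Tendsto (fun T => gT m N R G T z) Filter.atTop (nhds L) := by
  obtain ⟨C, hC⟩ := hGbdd
  have hdefect : Tendsto (fun k : ℕ => C * #(rangeSet m R) *
      (1 - (((k - 2 * ⌈R⌉.toNat : ℕ) : ℝ) / k) ^ m)) atTop (𝓝 0) := by
    simpa using ((tendsto_natCast_sub_div_atTop _).pow m).const_sub 1 |>.const_mul
      (C * #(rangeSet m R))
  obtain ⟨L, hL⟩ := exists_tendsto_of_limsup_le_add (abs_cubeEnergyDensity_le (z := z) hC) hdefect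
    ((eventually_ge_atTop 2).mono fun k hk => limsup_cubeEnergyDensity_le hm hN hC hGper hz.le hk)
  exact ⟨L, tendsto_gT_of_tendsto_cubeEnergyDensity hL⟩

theorem homogenization_formula_limit_exists
    (m N : ℕ) (hm : 1 ≤ m) (hN : 2 ≤ N) (R : ℝ) (hR : 0 < R)
    (G : (Fin m → ℤ) → (Fin m → ℤ) → EuclideanSpace ℝ (Fin N) →
      EuclideanSpace ℝ (Fin N) → ℝ)
    (hGbdd : ∃ C : ℝ, ∀ ξ β u v, |G ξ β u v| ≤ C)
    (hGper : ∀ ξ β γ u v, G ξ (β + γ) u v = G ξ β u v)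
    (z : EuclideanSpace ℝ (Fin N)) (hz : ‖z‖ < 1) :
    ∃ L : ℝ, Filter.Tendsto (fun T => gT m N R G T z) Filter.atTop (nhds L) :=
  homogenization_formula_limit_exists_general m N hm hN R G hGbdd hGper z hz
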